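/- arXiv:2305.06653 — 9 statements merged into one kernel-verified Lean document; each statement's English description precedes it below -/
import Mathlib

section
/- Let (q,n) be a Dickson pair. Then the residues modulo n of the numbers (q^k - 1)/(q - 1) = 1 + q + ... + q^{k-1}, for k = 1, 2, ..., n, form a complete set of residues modulo n; that is, the map sending k ∈ {1,...,n} to the residue class of ∑_{i=0}^{k-1} q^i modulo n is a bijection onto Z/nZ. -/
/-- A pair `(q, n)` of natural numbers is a Dickson pair if `q = p^l` for some prime `p`
and integer `l ≥ 1`, every prime divisor of `n` divides `q - 1`, and if `q ≡ 3 (mod 4)`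
then `4` does not divide `n`. -/
def DicksonPair (q n : ℕ) : Prop :=
  (∃ p l : ℕ, p.Prime ∧ 1 ≤ l ∧ q = p ^ l) ∧
  (∀ r : ℕ, r.Prime → r ∣ n → r ∣ q - 1) ∧
  (q % 4 = 3 → ¬ (4 ∣ n))

private lemma one_add_pow_of_sq {R : Type*} [CommRing R] {y : R} (hy : y * y = 0) (j : ℕ) :
    (1 + y) ^ j = 1 + (j : R) * y := by
  induction j with
  | zero => simp
  | succ j ih =>
    rw [pow_succ, ih]
    have h : (1 + (j : R) * y) * (1 + y) = 1 + ((j : R) + 1) * y + (j : R) * (y * y) := by ring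
    rw [h, hy, mul_zero, add_zero]
    push_cast
    ring

/-- In a Dickson-type situation, `p^k ∣ ∑_{i<m} q^i → p^k ∣ m`. -/
private lemma key_pow (q p : ℕ) (hq2 : 2 ≤ q) (hp : p.Prime) (hpq : p ∣ q - 1)
    (k : ℕ) (h4 : p = 2 → 2 ≤ k → q % 4 = 1) :
    ∀ m, p ^ k ∣ ∑ i ∈ Finset.range m, q ^ i → p ^ k ∣ m := by
  induction k with
  | zero => intro m _; simp
  | succ k ih =>
    have ih' := fun m => ih (fun h2 hk => h4 h2 (by omega)) m
    intro m hm
    -- q ≡ 1 mod p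
    have hq1 : (q : ZMod p) = 1 := by
      have h0 : ((q - 1 : ℕ) : ZMod p) = 0 := (ZMod.natCast_eq_zero_iff _ _).2 hpq
      rw [Nat.cast_sub (by omega)] at h0
      have h1 : (q : ZMod p) - 1 = 0 := by simpa using h0
      linear_combination h1
    -- S s ≡ s mod p
    have hSm : ∀ s : ℕ, ((∑ i ∈ Finset.range s, q ^ i : ℕ) : ZMod p) = (s : ZMod p) := by
      intro s
      push_cast
      simp [hq1]
    -- p ∣ m
    have hpm : p ∣ m := by
      have h1 : p ∣ ∑ i ∈ Finset.range m, q ^ i :=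
        dvd_trans (dvd_pow_self p (Nat.succ_ne_zero k)) hm
      have h2 := (ZMod.natCast_eq_zero_iff _ p).2 h1
      rw [hSm m] at h2
      exact (ZMod.natCast_eq_zero_iff _ p).1 h2
    rcases Nat.eq_zero_or_pos k with rfl | hk1
    · simpa using hpm
    obtain ⟨t, rfl⟩ := hpm
    set U : ℕ := ∑ j ∈ Finset.range p, (q ^ t) ^ j with hU
    -- S (p*t) = U * S t
    have hdecomp : (∑ i ∈ Finset.range (p * t), q ^ i) = U * ∑ i ∈ Finset.range t, q ^ i := by
      have hz : ((∑ i ∈ Finset.range (p * t), q ^ i : ℕ) : ℤ) =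
          ((U * ∑ i ∈ Finset.range t, q ^ i : ℕ) : ℤ) := by
        simp only [hU]
        have hne : ((q : ℤ) - 1) ≠ 0 := by
          have h2 : (2 : ℤ) ≤ (q : ℤ) := by exact_mod_cast hq2
          omega
        apply mul_right_cancel₀ hne
        have e1 : (∑ i ∈ Finset.range (p * t), (q : ℤ) ^ i) * ((q : ℤ) - 1) =
            (q : ℤ) ^ (p * t) - 1 := geom_sum_mul _ _
        have e2 : (∑ i ∈ Finset.range t, (q : ℤ) ^ i) * ((q : ℤ) - 1) =
            (q : ℤ) ^ t - 1 := geom_sum_mul _ _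
        have e3 : (∑ j ∈ Finset.range p, ((q : ℤ) ^ t) ^ j) * ((q : ℤ) ^ t - 1) =
            ((q : ℤ) ^ t) ^ p - 1 := geom_sum_mul _ _
        push_cast
        calc (∑ i ∈ Finset.range (p * t), (q : ℤ) ^ i) * ((q : ℤ) - 1)
            = (q : ℤ) ^ (p * t) - 1 := e1
          _ = ((q : ℤ) ^ t) ^ p - 1 := by rw [← pow_mul, Nat.mul_comm]
          _ = (∑ j ∈ Finset.range p, ((q : ℤ) ^ t) ^ j) * ((q : ℤ) ^ t - 1) := e3.symm
          _ = (∑ j ∈ Finset.range p, ((q : ℤ) ^ t) ^ j) *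
              ((∑ i ∈ Finset.range t, (q : ℤ) ^ i) * ((q : ℤ) - 1)) := by rw [e2]
          _ = (∑ j ∈ Finset.range p, ((q : ℤ) ^ t) ^ j) *
              (∑ i ∈ Finset.range t, (q : ℤ) ^ i) * ((q : ℤ) - 1) := by ring
      exact_mod_cast hz
    have hqt1 : p ∣ q ^ t - 1 := by
      refine dvd_trans hpq ?_
      simpa using Nat.sub_dvd_pow_sub_pow q 1 t
    have hqtpos : 1 ≤ q ^ t := Nat.one_le_pow _ _ (by omega)
    -- U ≡ p mod p^2
    have hUmod : (U : ZMod (p ^ 2)) = (p : ZMod (p ^ 2)) := by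
      set y : ZMod (p ^ 2) := ((q ^ t - 1 : ℕ) : ZMod (p ^ 2)) with hy
      have hy2 : y * y = 0 := by
        rw [hy, ← Nat.cast_mul, ZMod.natCast_eq_zero_iff, pow_two]
        exact Nat.mul_dvd_mul hqt1 hqt1
      have hqty : ((q ^ t : ℕ) : ZMod (p ^ 2)) = 1 + y := by
        rw [hy, Nat.cast_sub hqtpos]
        push_cast
        ring
      have hterm : ∀ j : ℕ, (j : ZMod (p ^ 2)) * y = ((j * (q ^ t - 1) : ℕ) : ZMod (p ^ 2)) := by
        intro j; rw [hy]; push_cast [Nat.cast_sub hqtpos]; ring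
      have hUy : (U : ZMod (p ^ 2)) =
          (p : ZMod (p ^ 2)) + ((∑ j ∈ Finset.range p, j : ℕ) : ZMod (p ^ 2)) * y := by
        rw [hU]
        push_cast
        rw [Finset.sum_congr rfl (fun j _ => by
          rw [show ((q : ZMod (p ^ 2)) ^ t) = 1 + y by exact_mod_cast hqty,
            one_add_pow_of_sq hy2 j])]
        rw [Finset.sum_add_distrib, ← Finset.sum_mul]
        simp
      rw [hUy]
      have hzero : ((∑ j ∈ Finset.range p, j : ℕ) : ZMod (p ^ 2)) * y = 0 := by
        rw [hterm]
        rw [ZMod.natCast_eq_zero_iff]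
        rcases Nat.Prime.eq_two_or_odd' hp with hp2 | hodd
        · -- p = 2 : q ≡ 1 mod 4, so p^2 = 4 ∣ q^t - 1
          have hq4 : q % 4 = 1 := h4 hp2 (by omega)
          have h41 : 4 ∣ q - 1 := by omega
          have h4t : 4 ∣ q ^ t - 1 :=
            dvd_trans h41 (by simpa using Nat.sub_dvd_pow_sub_pow q 1 t)
          subst hp2
          refine Dvd.dvd.mul_left ?_ _
          rw [show (2:ℕ)^2 = 4 by norm_num]
          exact h4t
        · -- p odd : use 2 * ∑ j = p * (p-1)
          have hcop2 : Nat.Coprime (p ^ 2) 2 :=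
            Nat.coprime_two_right.2 hodd.pow
          apply Nat.Coprime.dvd_of_dvd_mul_right hcop2
          obtain ⟨d, hd⟩ := hqt1
          rw [hd]
          rw [show (∑ j ∈ Finset.range p, j) * (p * d) * 2 =
            (∑ j ∈ Finset.range p, j) * 2 * (p * d) by ring]
          rw [Finset.sum_range_id_mul_two, pow_two]
          exact ⟨(p - 1) * d, by ring⟩
      rw [hzero, add_zero]
    -- extract U = p * u with u coprime to p
    have hUge : p ≤ U := by
      calc p = ∑ _j ∈ Finset.range p, 1 := by simp
        _ ≤ U := Finset.sum_le_sum (fun j _ => Nat.one_le_pow _ _ (by positivity))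
    have hUm : p ^ 2 ∣ U - p := by
      have := (ZMod.natCast_eq_natCast_iff U p (p ^ 2)).1 hUmod
      exact (Nat.modEq_iff_dvd' hUge).1 this.symm
    obtain ⟨w, hw⟩ := hUm
    have hUeq : U = p * (1 + p * w) := by
      have h1 : U = p ^ 2 * w + p := (Nat.sub_eq_iff_eq_add hUge).1 hw
      rw [h1, pow_two]
      ring
    have hu : ¬ p ∣ (1 + p * w) := by
      intro hdvd
      have h1 : p ∣ 1 := (Nat.dvd_add_right ⟨w, rfl⟩).1 (by simpa [Nat.add_comm] using hdvd)
      have h2 := Nat.le_of_dvd one_pos h1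
      have h3 := hp.two_le
      omega
    -- finish
    have hm' : p ^ k ∣ (∑ i ∈ Finset.range t, q ^ i) * (1 + p * w) := by
      have h1 : p * p ^ k ∣ p * ((∑ i ∈ Finset.range t, q ^ i) * (1 + p * w)) := by
        rw [hdecomp, hUeq] at hm
        calc p * p ^ k = p ^ (k + 1) := (pow_succ' p k).symm
          _ ∣ p * (1 + p * w) * ∑ i ∈ Finset.range t, q ^ i := hm
          _ = p * ((∑ i ∈ Finset.range t, q ^ i) * (1 + p * w)) := by ring
      exact (Nat.mul_dvd_mul_iff_left hp.pos).1 h1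
    have hcop : Nat.Coprime (p ^ k) (1 + p * w) :=
      Nat.Coprime.pow_left k (hp.coprime_iff_not_dvd.2 hu)
    have hSt : p ^ k ∣ ∑ i ∈ Finset.range t, q ^ i :=
      (Nat.Coprime.dvd_of_dvd_mul_right hcop hm')
    have ht : p ^ k ∣ t := ih' t hSt
    calc p ^ (k + 1) = p * p ^ k := pow_succ' p k
      _ ∣ p * t := Nat.mul_dvd_mul_left p ht

private lemma key_dvd (q n : ℕ) (h : DicksonPair q n) (hq2 : 2 ≤ q) :
    ∀ m, n ∣ ∑ i ∈ Finset.range m, q ^ i → n ∣ m := by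
  obtain ⟨_, h2, h3⟩ := h
  intro m hm
  rw [Nat.dvd_iff_prime_pow_dvd_dvd]
  intro p k pp hpk
  rcases Nat.eq_zero_or_pos k with rfl | hk
  · simp
  have hpn : p ∣ n := dvd_trans (dvd_pow_self p hk.ne') hpk
  have hpq : p ∣ q - 1 := h2 p pp hpn
  have h4 : p = 2 → 2 ≤ k → q % 4 = 1 := by
    intro hp2 hk2
    subst hp2
    have h4n : 4 ∣ n := dvd_trans (pow_dvd_pow 2 hk2) hpk
    have hq3 : q % 4 ≠ 3 := fun hq3 => h3 hq3 h4n
    have : q % 2 = 1 := by omega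
    omega
  exact key_pow q p hq2 pp hpq k h4 m (dvd_trans hpk hm)

/-- For a Dickson pair `(q, n)`, the residues modulo `n` of
`(q^k - 1)/(q - 1) = ∑_{i=0}^{k-1} q^i` for `k = 1, …, n` form a complete set of
residues modulo `n`. -/
theorem dickson_pair_geom_sum_residues_bijective (q n : ℕ) (h : DicksonPair q n) :
    Function.Bijective
      (fun k : Fin n => ((∑ i ∈ Finset.range (k.val + 1), q ^ i : ℕ) : ZMod n)) := by
  obtain ⟨⟨p, l, pp, hl, hql⟩, h2, h3⟩ := h
  have hq2 : 2 ≤ q := by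
    rw [hql]; exact Nat.one_lt_pow (by omega) pp.one_lt
  have hn : n ≠ 0 := by
    rintro rfl
    obtain ⟨r, hrq, hr⟩ := Nat.exists_infinite_primes q
    have := Nat.le_of_dvd (by omega) (h2 r hr (dvd_zero r))
    omega
  haveI : NeZero n := ⟨hn⟩
  have hcop : Nat.Coprime q n := by
    have hpn : ¬ p ∣ n := by
      intro hpn
      have h1 : p ∣ q - 1 := h2 p pp hpn
      have h2' : p ∣ q := hql ▸ dvd_pow_self p (by omega)
      have : p ∣ q - (q - 1) := Nat.dvd_sub h2' h1
      rw [show q - (q - 1) = 1 by omega] at this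
      have h4 := Nat.le_of_dvd one_pos this
      have h5 := pp.two_le
      omega
    rw [hql]
    exact Nat.Coprime.pow_left l (pp.coprime_iff_not_dvd.2 hpn)
  have key := key_dvd q n ⟨⟨p, l, pp, hl, hql⟩, h2, h3⟩ hq2
  have hinj : Function.Injective
      (fun k : Fin n => ((∑ i ∈ Finset.range (k.val + 1), q ^ i : ℕ) : ZMod n)) := by
    have haux : ∀ a b : Fin n, a.val ≤ b.val →
        ((∑ i ∈ Finset.range (a.val + 1), q ^ i : ℕ) : ZMod n) =
        ((∑ i ∈ Finset.range (b.val + 1), q ^ i : ℕ) : ZMod n) → a = b := by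
      intro a b hab heq
      set d := b.val - a.val with hd
      have hsplit : (∑ i ∈ Finset.range (b.val + 1), q ^ i) =
          (∑ i ∈ Finset.range (a.val + 1), q ^ i) +
          q ^ (a.val + 1) * ∑ i ∈ Finset.range d, q ^ i := by
        have hb : b.val + 1 = (a.val + 1) + d := by omega
        rw [hb, Finset.sum_range_add, Finset.mul_sum]
        congr 1
        exact Finset.sum_congr rfl (fun i _ => by rw [pow_add])
      have hmod := (ZMod.natCast_eq_natCast_iff _ _ _).1 heq
      rw [hsplit] at hmod
      have hdvd : n ∣ q ^ (a.val + 1) * ∑ i ∈ Finset.range d, q ^ i := by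
        have h1 := (Nat.modEq_iff_dvd' (Nat.le_add_right _ _)).1 hmod
        simpa using h1
      have hdvd2 : n ∣ ∑ i ∈ Finset.range d, q ^ i :=
        Nat.Coprime.dvd_of_dvd_mul_left ((hcop.pow_left _).symm) hdvd
      have hnd : n ∣ d := key d hdvd2
      have hdlt : d < n := lt_of_le_of_lt (Nat.sub_le _ _) b.isLt
      have hd0 : d = 0 := by
        rcases Nat.eq_zero_or_pos d with h0 | hpos
        · exact h0
        · exact absurd (Nat.le_of_dvd hpos hnd) (by omega)
      exact Fin.ext (by omega)
    intro a b heq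
    rcases le_total a.val b.val with hab | hab
    · exact haux a b hab heq
    · exact (haux b a hab heq.symm).symm
  rw [Fintype.bijective_iff_injective_and_card]
  exact ⟨hinj, by simp [ZMod.card]⟩
end

section
/- Let (q,n) be a Dickson pair. If 1 ≤ k < l ≤ n, then (q^k - 1)/(q - 1) and (q^l - 1)/(q - 1) are incongruent modulo n; that is, ∑_{i=0}^{k-1} q^i ≢ ∑_{i=0}^{l-1} q^i (mod n). -/
/-!
The difference of the two sums is `q ^ k * (1 + q + ⋯ + q ^ (m - 1))` with `m = l - k`, and `q` is
prime to `n`, so `n` divides the geometric sum of length `m`, where `0 < m < n`. For a prime power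
`r ^ e` dividing `n` we have `r ∣ q - 1`, so lifting the exponent gives
`v_r (1 + q + ⋯ + q ^ (m - 1)) = v_r m`; for `r = 2` this needs `4 ∣ q - 1`, which the Dickson
condition provides as soon as `e ≥ 2`, while for `e ≤ 1` the congruence
`1 + q + ⋯ + q ^ (m - 1) ≡ m (mod r)` suffices. Hence `n ∣ m`, which is impossible.
-/

open Finset

theorem padicValNat_two_pow_sub_pow_of_four_dvd {x y n : ℕ} (hyx : y < x) (hxy : 4 ∣ x - y)
    (hx : ¬2 ∣ x) (hn : n ≠ 0) :
    padicValNat 2 (x ^ n - y ^ n) = padicValNat 2 (x - y) + padicValNat 2 n := by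
  rw [← Nat.cast_inj (R := ℕ∞), Nat.cast_add]
  iterate 3 rw [padicValNat_eq_emultiplicity]
  · simp only [← Int.natCast_emultiplicity]
    rw [← Int.natCast_dvd_natCast] at hxy hx
    push_cast [hyx.le, Nat.pow_le_pow_left hyx.le] at hxy hx ⊢
    exact Int.two_pow_sub_pow' n hxy hx
  · exact hn
  · exact Nat.sub_ne_zero_of_lt hyx
  · exact Nat.sub_ne_zero_of_lt (Nat.pow_lt_pow_left hyx hn)

theorem Nat.Prime.not_dvd_of_dvd_sub_one {r q : ℕ} (hr : r.Prime) (hq : q ≠ 0) (h : r ∣ q - 1) :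
    ¬r ∣ q :=
  (Nat.Prime.coprime_iff_not_dvd hr).1 <|
    ((Nat.coprime_self_sub_left (by omega)).2 (Nat.coprime_one_left q)).coprime_dvd_left h

theorem geom_sum_range_add {R : Type*} [Semiring R] (x : R) (k m : ℕ) :
    ∑ i ∈ range (k + m), x ^ i = ∑ i ∈ range k, x ^ i + x ^ k * ∑ i ∈ range m, x ^ i := by
  simp only [sum_range_add, pow_add, mul_sum]

section GeomSum

variable {r q m : ℕ}

theorem geom_sum_modEq_of_modEq_one {d : ℕ} (hq : q ≡ 1 [MOD d]) (m : ℕ) :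
    ∑ i ∈ range m, q ^ i ≡ m [MOD d] := by
  simpa using Nat.ModEq.sum (s := range m) fun i _ ↦ hq.pow i

theorem padicValNat_pow_sub_one [hr : Fact r.Prime] (hq : 1 < q) (hrq : r ∣ q - 1)
    (h2 : r = 2 → 4 ∣ q - 1) (hm : m ≠ 0) :
    padicValNat r (q ^ m - 1) = padicValNat r (q - 1) + padicValNat r m := by
  have hrq' := hr.out.not_dvd_of_dvd_sub_one (by omega) hrq
  rcases eq_or_ne r 2 with rfl | hr2
  · simpa using padicValNat_two_pow_sub_pow_of_four_dvd hq (h2 rfl) hrq' hm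
  · simpa using padicValNat.pow_sub_pow (hr.out.odd_of_ne_two hr2) hq hrq hrq' hm

theorem padicValNat_geom_sum [Fact r.Prime] (hq : 1 < q) (hrq : r ∣ q - 1)
    (h2 : r = 2 → 4 ∣ q - 1) (hm : m ≠ 0) :
    padicValNat r (∑ i ∈ range m, q ^ i) = padicValNat r m := by
  have hmul : (∑ i ∈ range m, q ^ i) * (q - 1) = q ^ m - 1 := by
    have := geom_sum_mul_add (q - 1) m
    rw [Nat.sub_add_cancel hq.le] at this
    omega
  have hlte := padicValNat_pow_sub_one hq hrq h2 hm
  rw [← hmul, padicValNat.mul (geom_sum_pos (by omega) hm).ne' (by omega)] at hlte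
  omega

theorem pow_dvd_of_pow_dvd_geom_sum {e : ℕ} (hr : r.Prime) (hq : 1 < q) (hrq : r ∣ q - 1)
    (h2 : r = 2 → 2 ≤ e → 4 ∣ q - 1) (h : r ^ e ∣ ∑ i ∈ range m, q ^ i) : r ^ e ∣ m := by
  rcases Nat.lt_or_ge e 2 with he | he
  · have hre : r ^ e ∣ q - 1 := (pow_dvd_pow r (by omega : e ≤ 1)).trans (by simpa using hrq)
    have hq1 : q ≡ 1 [MOD r ^ e] := ((Nat.modEq_iff_dvd' hq.le).2 hre).symm
    exact ((geom_sum_modEq_of_modEq_one hq1 m).dvd_iff dvd_rfl).1 h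
  rcases eq_or_ne m 0 with rfl | hm
  · exact dvd_zero _
  have : Fact r.Prime := ⟨hr⟩
  rw [padicValNat_dvd_iff_le hm, ← padicValNat_geom_sum hq hrq (h2 · he) hm,
    ← padicValNat_dvd_iff_le (geom_sum_pos (by omega) hm).ne']
  exact h

end GeomSum

namespace DicksonPair

variable {q n : ℕ}

theorem one_lt (h : DicksonPair q n) : 1 < q := by
  obtain ⟨⟨p, l, hp, hl, rfl⟩, -, -⟩ := h
  exact Nat.one_lt_pow (by omega) hp.one_lt

theorem coprime (h : DicksonPair q n) : n.Coprime q :=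
  Nat.coprime_of_dvd fun r hr hrn ↦
    hr.not_dvd_of_dvd_sub_one (by have := h.one_lt; omega) (h.2.1 r hr hrn)

theorem dvd_of_dvd_geom_sum (h : DicksonPair q n) {m : ℕ} (hS : n ∣ ∑ i ∈ range m, q ^ i) :
    n ∣ m := by
  refine (Nat.dvd_iff_prime_pow_dvd_dvd m n).2 fun r e hr hre ↦ ?_
  rcases e.eq_zero_or_pos with rfl | he
  · simp
  have hrq := h.2.1 r hr ((dvd_pow_self r he.ne').trans hre)
  refine pow_dvd_of_pow_dvd_geom_sum hr h.one_lt hrq ?_ (hre.trans hS)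
  rintro rfl he2
  have h4 : ¬q % 4 = 3 := fun h3 ↦ h.2.2 h3 ((pow_dvd_pow 2 he2).trans hre)
  have := h.one_lt
  omega

end DicksonPair

/-- For a Dickson pair `(q, n)` and `1 ≤ k < l ≤ n`, the geometric sums
`∑_{i=0}^{k-1} q^i` and `∑_{i=0}^{l-1} q^i` are incongruent modulo `n`. -/
theorem dickson_pair_geom_sum_not_modEq (q n k l : ℕ) (h : DicksonPair q n)
    (hk : 1 ≤ k) (hkl : k < l) (hl : l ≤ n) :
    ¬ (∑ i ∈ Finset.range k, q ^ i) ≡ (∑ i ∈ Finset.range l, q ^ i) [MOD n] := by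
  intro hmod
  obtain ⟨m, rfl⟩ := Nat.exists_eq_add_of_le hkl.le
  rw [geom_sum_range_add, Nat.modEq_iff_dvd' (Nat.le_add_right _ _), Nat.add_sub_cancel_left]
    at hmod
  have hnm : n ∣ m := h.dvd_of_dvd_geom_sum ((h.coprime.pow_right k).dvd_of_dvd_mul_left hmod)
  have := Nat.le_of_dvd (by omega) hnm
  omega
end

section
/- Let (q,n) be a Dickson pair. Then for every t with 1 ≤ t < n, n does not divide (q^t - 1)/(q - 1); that is, n ∤ ∑_{i=0}^{t-1} q^i. -/
lemma geom_sum_modEq_aux (q m t : ℕ) (h : q ≡ 1 [MOD m]) :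
    (∑ i ∈ Finset.range t, q ^ i) ≡ t [MOD m] := by
  induction t with
  | zero => simp [Nat.ModEq.refl]
  | succ t ih =>
    rw [Finset.sum_range_succ]
    have : q ^ t ≡ 1 [MOD m] := by simpa using h.pow t
    exact ih.add this

/-- For a Dickson pair `(q, n)` and every `t` with `1 ≤ t < n`, `n` does not divide
the geometric sum `∑_{i=0}^{t-1} q^i = (q^t - 1)/(q - 1)`. -/
theorem dickson_pair_not_dvd_geom_sum (q n : ℕ) (h : DicksonPair q n) :
    ∀ t : ℕ, 1 ≤ t → t < n → ¬ (n ∣ ∑ i ∈ Finset.range t, q ^ i) := by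
  obtain ⟨⟨p, l, hp, hl, hq⟩, hprimes, h4⟩ := h
  intro t ht1 htn hdvd
  have hq2 : 2 ≤ q := by
    subst hq
    calc 2 ≤ p := hp.two_le
    _ ≤ p ^ l := Nat.le_self_pow (by omega) p
  set S := ∑ i ∈ Finset.range t, q ^ i with hS
  have hS0 : 0 < S :=
    Finset.sum_pos (fun i _ => pow_pos (by omega) i) (by simp; omega)
  have hmul : (q - 1) * S = q ^ t - 1 := by
    have h1 : 1 ≤ q ^ t := Nat.one_le_pow t q (by omega)
    zify [show 1 ≤ q by omega, h1, hS]
    linear_combination (geom_sum_mul (q : ℤ) t)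
  have hn0 : n ≠ 0 := by omega
  have ht0 : t ≠ 0 := by omega
  have hfle : n.factorization ≤ S.factorization :=
    (Nat.factorization_le_iff_dvd hn0 hS0.ne').mpr hdvd
  have hnt : n ∣ t := by
    rw [← Nat.factorization_le_iff_dvd hn0 ht0, Finsupp.le_def]
    intro r
    by_cases hr : r.Prime
    swap
    · simp [Nat.factorization_eq_zero_of_not_prime _ hr]
    by_cases hrn : r ∣ n
    swap
    · simp [Nat.factorization_eq_zero_of_not_dvd hrn]
    have hrq1 : r ∣ q - 1 := hprimes r hr hrn
    have hrq : ¬ r ∣ q := by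
      intro hd
      have : r ∣ 1 := by
        have := Nat.dvd_sub hd hrq1
        simpa [show q - (q - 1) = 1 by omega] using this
      have := Nat.le_of_dvd one_pos this
      have := hr.two_le
      omega
    haveI : Fact r.Prime := ⟨hr⟩
    have hle : n.factorization r ≤ S.factorization r := hfle r
    have hprod : (q - 1).factorization r + S.factorization r = (q ^ t - 1).factorization r := by
      rw [← hmul, Nat.factorization_mul (by omega) hS0.ne']
      simp
    rcases Nat.Prime.eq_two_or_odd' hr with h2 | hodd
    · -- r = 2
      subst h2
      have hqodd : q % 2 = 1 := by omega
      -- 2 ∣ S, hence 2 ∣ t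
      have h2S : 2 ∣ S := dvd_trans hrn hdvd
      have hmod : S % 2 = t % 2 := geom_sum_modEq_aux q 2 t (by show q % 2 = 1 % 2; omega)
      have hteven : 2 ∣ t := by omega
      rcases (by omega : q % 4 = 1 ∨ q % 4 = 3) with hq4 | hq4
      · -- LTE for 2
        have hlte := padicValNat.pow_two_sub_pow (x := q) (y := 1) (by omega)
          (by simpa using hrq1) (by omega) ht0 (even_iff_two_dvd.mpr hteven)
        simp only [one_pow] at hlte
        have hv1 : padicValNat 2 (q + 1) = 1 := by
          have hd1 : (2 : ℕ) ^ 1 ∣ q + 1 := by simpa using (by omega : 2 ∣ q + 1)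
          have hd2 : ¬ (2 : ℕ) ^ 2 ∣ q + 1 := by norm_num; omega
          have k1 := (Nat.Prime.pow_dvd_iff_le_factorization Nat.prime_two
            (by omega : q + 1 ≠ 0)).mpr.mt hd2
          have k2 := (Nat.Prime.pow_dvd_iff_le_factorization Nat.prime_two
            (by omega : q + 1 ≠ 0)).mp hd1
          rw [Nat.factorization_def _ Nat.prime_two] at k1 k2
          omega
        simp only [Nat.factorization_def _ Nat.prime_two] at hprod hle ⊢
        omega
      · -- q ≡ 3 mod 4 : factorization 2 of n is ≤ 1
        have hn4 : ¬ (4 : ℕ) ∣ n := h4 hq4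
        have k1 : ¬ 2 ≤ n.factorization 2 := by
          intro hk
          have h22 : (2 : ℕ) ^ 2 ∣ n :=
            (Nat.Prime.pow_dvd_iff_le_factorization Nat.prime_two hn0).mpr hk
          norm_num at h22
          exact hn4 h22
        have k2 : 1 ≤ t.factorization 2 :=
          (Nat.Prime.pow_dvd_iff_le_factorization Nat.prime_two ht0).mp (by simpa using hteven)
        omega
    · -- odd prime
      have hlte := padicValNat.pow_sub_pow (p := r) hodd (x := q) (y := 1) (by omega)
        (by simpa using hrq1) hrq ht0
      simp only [one_pow] at hlte
      simp only [Nat.factorization_def _ hr] at hprod hle ⊢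
      omega
  exact absurd (Nat.le_of_dvd (by omega) hnt) (by omega)
end

section
/- Let (q,n) be a Dickson pair, let p be a prime and m ≥ 1 an integer with p^m dividing n, and let t ≥ 1. If p^m divides (q^t - 1)/(q - 1) = ∑_{i=0}^{t-1} q^i, then p^m divides t. -/
theorem dvd_geom_sum_iff_of_dvd_sub_one {R : Type*} [CommRing R] {x p : R} (h : p ∣ x - 1)
    (n : ℕ) : p ∣ ∑ i ∈ Finset.range n, x ^ i ↔ p ∣ (n : R) := by
  simpa using dvd_geom_sum₂_iff_of_dvd_sub (n := n) (y := 1) h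

section LiftingTheExponent

variable {p : ℕ} (hp : p.Prime) {q : ℤ} (hpq : (p : ℤ) ∣ q - 1) (h4 : p = 2 → 4 ∣ q - 1)
include hp hpq h4

theorem Int.emultiplicity_pow_sub_one_of_dvd_sub_one (t : ℕ) :
    emultiplicity (p : ℤ) (q ^ t - 1) =
      emultiplicity (p : ℤ) (q - 1) + emultiplicity (p : ℤ) t := by
  have hq : ¬ (p : ℤ) ∣ q := fun hq =>
    (Nat.prime_iff_prime_int.mp hp).not_dvd_one ((dvd_sub_right hq).mp hpq)
  rcases hp.eq_two_or_odd' with rfl | hodd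
  · simpa using Int.two_pow_sub_pow' t (h4 rfl) hq
  · rw [Int.natCast_emultiplicity]
    simpa using Int.emultiplicity_pow_sub_pow hp hodd hpq hq t

theorem Int.emultiplicity_geom_sum_of_dvd_sub_one (t : ℕ) :
    emultiplicity (p : ℤ) (∑ i ∈ Finset.range t, q ^ i) = emultiplicity (p : ℤ) t := by
  rcases eq_or_ne q 1 with rfl | hq1
  · simp
  have hfin : FiniteMultiplicity (p : ℤ) (q - 1) :=
    Int.finiteMultiplicity_iff.mpr ⟨by simpa using hp.ne_one, sub_ne_zero.mpr hq1⟩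
  have hlte := Int.emultiplicity_pow_sub_one_of_dvd_sub_one hp hpq h4 t
  rw [← geom_sum_mul, emultiplicity_mul (Nat.prime_iff_prime_int.mp hp), add_comm,
    hfin.emultiplicity_eq_multiplicity] at hlte
  exact WithTop.add_left_cancel WithTop.coe_ne_top hlte

theorem Int.pow_dvd_geom_sum_iff_of_dvd_sub_one (m t : ℕ) :
    (p : ℤ) ^ m ∣ ∑ i ∈ Finset.range t, q ^ i ↔ (p : ℤ) ^ m ∣ t := by
  rw [pow_dvd_iff_le_emultiplicity, pow_dvd_iff_le_emultiplicity,
    Int.emultiplicity_geom_sum_of_dvd_sub_one hp hpq h4]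

end LiftingTheExponent

theorem dickson_pair_prime_pow_dvd_geom_sum_imp_dvd_general (q n p m t : ℕ)
    (h : DicksonPair q n) (hp : p.Prime) (hm : 1 ≤ m) (hpm : p ^ m ∣ n)
    (hdvd : p ^ m ∣ ∑ i ∈ Finset.range t, q ^ i) : p ^ m ∣ t := by
  obtain ⟨⟨r, l, hr, -, hq⟩, hdiv, h4n⟩ := h
  have hq1 : 1 ≤ q := by rw [hq]; exact Nat.one_le_pow l r hr.pos
  have hpq : (p : ℤ) ∣ q - 1 := by
    have := hdiv p hp ((dvd_pow_self p (by omega)).trans hpm)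
    exact_mod_cast Int.natCast_dvd_natCast.mpr this
  rw [← Int.natCast_dvd_natCast] at hdvd ⊢
  push_cast at hdvd ⊢
  by_cases h4 : p = 2 → 4 ∣ (q : ℤ) - 1
  · exact (Int.pow_dvd_geom_sum_iff_of_dvd_sub_one hp hpq h4 m t).mp hdvd
  obtain ⟨rfl, h4⟩ := Classical.not_imp.mp h4
  have hq3 : q % 4 = 3 := by omega
  have hm1 : m = 1 := by
    by_contra hm1
    exact h4n hq3 ((pow_dvd_pow 2 (by omega : 2 ≤ m)).trans hpm)
  subst hm1
  rw [pow_one] at hdvd ⊢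
  exact (dvd_geom_sum_iff_of_dvd_sub_one hpq t).mp hdvd

/-- Let `(q, n)` be a Dickson pair, `p` a prime, `m ≥ 1` with `p^m ∣ n`, and `t ≥ 1`.
If `p^m` divides the geometric sum `∑_{i=0}^{t-1} q^i = (q^t - 1)/(q - 1)`, then
`p^m` divides `t`. -/
theorem dickson_pair_prime_pow_dvd_geom_sum_imp_dvd (q n p m t : ℕ)
    (h : DicksonPair q n) (hp : p.Prime) (hm : 1 ≤ m) (hpm : p ^ m ∣ n) (ht : 1 ≤ t)
    (hdvd : p ^ m ∣ ∑ i ∈ Finset.range t, q ^ i) : p ^ m ∣ t :=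
  dickson_pair_prime_pow_dvd_geom_sum_imp_dvd_general q n p m t h hp hm hpm hdvd
end

section
/- Let (q,n) be a Dickson pair. Then n divides (q^n - 1)/(q - 1); that is, n ∣ ∑_{i=0}^{n-1} q^i. Equivalently, n(q - 1) divides q^n - 1. -/
/-!
Write `S_n(x) = ∑_{i<n} x^i`. The geometric sum is multiplicative in the sense that
`S_{ab}(x) = S_a(x) · S_b(x^a)`, and if `x ≡ 1 (mod p)` then `S_p(x) ≡ p ≡ 0 (mod p)`.
Since `x ≡ 1 (mod p)` is inherited by `x^a`, induction over the factorisation of `n` gives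
`n ∣ S_n(x)` as soon as `x ≡ 1` modulo every prime divisor of `n`; multiplying by `x - 1`
turns this into `n (x - 1) ∣ x^n - 1`.
-/

open Finset

theorem geom_sum_range_mul {R : Type*} [CommSemiring R] (x : R) (a b : ℕ) :
    ∑ i ∈ range (a * b), x ^ i = (∑ i ∈ range a, x ^ i) * ∑ k ∈ range b, (x ^ a) ^ k := by
  induction b with
  | zero => simp
  | succ b ih =>
    rw [Nat.mul_succ, sum_range_add, ih, sum_range_succ, mul_add, ← pow_mul]
    congr 1
    simp only [sum_mul, pow_add, mul_comm]

namespace Nat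

theorem geom_sum_modEq_of_modEq_one {x p : ℕ} (hx : x ≡ 1 [MOD p]) (n : ℕ) :
    ∑ i ∈ range n, x ^ i ≡ n [MOD p] := by
  simpa using Nat.ModEq.sum (s := range n) fun i _ => hx.pow i

theorem dvd_geom_sum_self_of_modEq_one {x p : ℕ} (hx : x ≡ 1 [MOD p]) :
    p ∣ ∑ i ∈ range p, x ^ i :=
  modEq_zero_iff_dvd.1 ((geom_sum_modEq_of_modEq_one hx p).trans (modEq_zero_iff_dvd.2 dvd_rfl))

theorem dvd_geom_sum_of_forall_prime_dvd_modEq_one {n x : ℕ}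
    (hx : ∀ p, p.Prime → p ∣ n → x ≡ 1 [MOD p]) : n ∣ ∑ i ∈ range n, x ^ i := by
  induction n using Nat.recOnMul generalizing x with
  | zero => simp
  | one => exact one_dvd _
  | prime p hp => exact dvd_geom_sum_self_of_modEq_one (hx p hp dvd_rfl)
  | mul a b iha ihb =>
    rw [geom_sum_range_mul]
    refine mul_dvd_mul (iha fun p hp hpa => hx p hp (hpa.mul_right b)) (ihb fun p hp hpb => ?_)
    simpa using (hx p hp (hpb.mul_left a)).pow a

end Nat

/-- For a Dickson pair `(q, n)`, `n` divides the geometric sum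
`∑_{i=0}^{n-1} q^i = (q^n - 1)/(q - 1)`; equivalently, `n·(q - 1)` divides `q^n - 1`. -/
theorem dickson_pair_dvd_geom_sum (q n : ℕ) (h : DicksonPair q n) :
    (n ∣ ∑ i ∈ Finset.range n, q ^ i) ∧ (n * (q - 1) ∣ q ^ n - 1) := by
  obtain ⟨⟨p, l, hp, -, rfl⟩, hprimes, -⟩ := h
  have hq : 1 ≤ p ^ l := pow_pos hp.pos l
  have hdvd : n ∣ ∑ i ∈ range n, (p ^ l) ^ i :=
    Nat.dvd_geom_sum_of_forall_prime_dvd_modEq_one fun r hr hrn =>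
      ((Nat.modEq_iff_dvd' hq).2 (hprimes r hr hrn)).symm
  refine ⟨hdvd, ?_⟩
  rw [← geom_sum_mul_of_one_le hq]
  exact mul_dvd_mul_right hdvd _
end

section
/- Let (q,n) be a Dickson pair, let F be a finite field with exactly q^n elements, and let g be a generator of the cyclic multiplicative group F^×. Then every nonzero element x of F can be written as x = g^{(q^k - 1)/(q - 1) + n·δ} for some k with 1 ≤ k ≤ n and some natural number δ. -/
open Finset

lemma dp_geom_mul (q : ℕ) (hq : 1 ≤ q) (m : ℕ) :
    (q - 1) * ∑ i ∈ Finset.range m, q ^ i = q ^ m - 1 := by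
  induction m with
  | zero => simp
  | succ m ih =>
    rw [Finset.sum_range_succ, Nat.mul_add, ih, pow_succ]
    have h1 : 1 ≤ q ^ m := Nat.one_le_pow _ _ hq
    have h3 : 1 ≤ q ^ m * q := Nat.one_le_iff_ne_zero.mpr (by positivity)
    zify [h1, h3, hq]
    ring

lemma dp_parity (q : ℕ) (hq : q % 2 = 1) (m : ℕ) :
    (∑ i ∈ Finset.range m, q ^ i) % 2 = m % 2 := by
  induction m with
  | zero => simp
  | succ m ih =>
    rw [Finset.sum_range_succ, Nat.add_mod, ih, Nat.pow_mod, hq]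
    simp [Nat.add_mod]

lemma dp_sum_pos (q : ℕ) (hq : 1 ≤ q) (m : ℕ) (hm : m ≠ 0) :
    0 < ∑ i ∈ Finset.range m, q ^ i :=
  Finset.sum_pos (fun i _ => pow_pos (by omega) i) (Finset.nonempty_range_iff.mpr hm)

lemma dp_split (q j t : ℕ) :
    ∑ i ∈ Finset.range (j + t), q ^ i
      = (∑ i ∈ Finset.range j, q ^ i) + q ^ j * ∑ i ∈ Finset.range t, q ^ i := by
  rw [Finset.sum_range_add, Finset.mul_sum]
  congr 1
  exact Finset.sum_congr rfl fun i _ => by rw [pow_add]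

lemma dp_val (p q m : ℕ) (hp : p.Prime) (hq : 2 ≤ q) (hpq : p ∣ q - 1) (hm : m ≠ 0)
    (hq4 : p = 2 → q % 4 = 1) :
    padicValNat p (∑ i ∈ Finset.range m, q ^ i) = padicValNat p m := by
  haveI : Fact p.Prime := ⟨hp⟩
  have hq1 : q - 1 ≠ 0 := by omega
  have hS : (∑ i ∈ Finset.range m, q ^ i) ≠ 0 := (dp_sum_pos q (by omega) m hm).ne'
  have hmul : padicValNat p ((q - 1) * ∑ i ∈ Finset.range m, q ^ i)
      = padicValNat p (q - 1) + padicValNat p (∑ i ∈ Finset.range m, q ^ i) :=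
    padicValNat.mul hq1 hS
  rw [dp_geom_mul q (by omega) m] at hmul
  have hx : ¬ p ∣ q := by
    intro hdq
    have : p ∣ q - (q - 1) := Nat.dvd_sub hdq hpq
    rw [show q - (q - 1) = 1 by omega] at this
    exact hp.one_lt.ne' (Nat.eq_one_of_dvd_one this)
  by_cases hp2 : p = 2
  · subst hp2
    have hq4' : q % 4 = 1 := hq4 rfl
    rcases Nat.even_or_odd m with hme | hmo
    · -- m even
      have hlte := padicValNat.pow_two_sub_pow (x := q) (y := 1) (by omega) (by omega) hx hm hme
      rw [one_pow] at hlte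
      have hqp1 : padicValNat 2 (q + 1) = 1 := by
        obtain ⟨t, ht⟩ : ∃ t, q + 1 = 2 * t := ⟨(q + 1) / 2, by omega⟩
        have ht2 : ¬ 2 ∣ t := by omega
        rw [ht, padicValNat.mul (by norm_num) (by omega),
          padicValNat.self (by norm_num), padicValNat.eq_zero_of_not_dvd ht2]
      rw [hqp1] at hlte
      omega
    · -- m odd
      have h1 : ¬ 2 ∣ (∑ i ∈ Finset.range m, q ^ i) := by
        have := dp_parity q (by omega) m
        rcases hmo with ⟨c, hc⟩
        omega
      have h2 : ¬ 2 ∣ m := by rcases hmo with ⟨c, hc⟩; omega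
      rw [padicValNat.eq_zero_of_not_dvd h1, padicValNat.eq_zero_of_not_dvd h2]
  · have hodd : Odd p := hp.odd_of_ne_two hp2
    have hlte := padicValNat.pow_sub_pow (p := p) hodd (x := q) (y := 1) (by omega) hpq hx hm
    rw [one_pow] at hlte
    omega

lemma dp_key (q n d m : ℕ) (h : DicksonPair q n) (hq : 2 ≤ q) (hn : n ≠ 0)
    (hdn : d ∣ n) (hm : m ≠ 0) (hdS : d ∣ ∑ i ∈ Finset.range m, q ^ i) : d ∣ m := by
  have hd0 : d ≠ 0 := by rintro rfl; exact hn (zero_dvd_iff.mp hdn)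
  have hS : (∑ i ∈ Finset.range m, q ^ i) ≠ 0 := (dp_sum_pos q (by omega) m hm).ne'
  rw [← Nat.factorization_le_iff_dvd hd0 hm, Finsupp.le_def]
  intro p
  by_cases hp : p.Prime
  swap
  · simp [Nat.factorization_eq_zero_of_not_prime _ hp]
  set e := d.factorization p with he
  rcases Nat.eq_zero_or_pos e with he0 | hepos
  · simp [← he, he0]
  have hpd : p ∣ d := Nat.dvd_of_factorization_pos (by omega)
  have hpn : p ∣ n := hpd.trans hdn
  have hpq1 : p ∣ q - 1 := h.2.1 p hp hpn
  have hqodd : p = 2 → q % 2 = 1 := by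
    rintro rfl; obtain ⟨c, hc⟩ := hpq1; omega
  have hpeS : p ^ e ∣ ∑ i ∈ Finset.range m, q ^ i := (Nat.ordProj_dvd d p).trans hdS
  by_cases hcase : p = 2 ∧ q % 4 = 3
  · obtain ⟨rfl, hq3⟩ := hcase
    have h4n : ¬ (4 ∣ n) := h.2.2 hq3
    -- e ≤ 1
    have he1 : e ≤ 1 := by
      by_contra hgt
      have : (2 : ℕ) ^ 2 ∣ d := by
        rw [(Nat.Prime.pow_dvd_iff_le_factorization hp hd0)]; omega
      exact h4n (by norm_num at this ⊢; exact this.trans hdn)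
    have he1' : e = 1 := by omega
    -- 2 ∣ S m implies 2 ∣ m
    have h2S : 2 ∣ ∑ i ∈ Finset.range m, q ^ i := by
      have := hpeS; rw [he1', pow_one] at this; exact this
    have h2m : 2 ∣ m := by
      have := dp_parity q (hqodd rfl) m
      omega
    rw [he1']
    rw [← Nat.Prime.pow_dvd_iff_le_factorization hp hm, pow_one]
    exact h2m
  · have hq4 : p = 2 → q % 4 = 1 := by
      intro h2; have := hqodd h2
      rcases hcase with _
      have : ¬ (p = 2 ∧ q % 4 = 3) := hcase
      omega
    have hval := dp_val p q m hp hq hpq1 hm hq4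
    have heS : e ≤ padicValNat p (∑ i ∈ Finset.range m, q ^ i) := by
      rw [← Nat.factorization_def _ hp]
      exact (Nat.Prime.pow_dvd_iff_le_factorization hp hS).mp hpeS
    rw [hval] at heS
    rwa [Nat.factorization_def _ hp]



/-- Let `(q, n)` be a Dickson pair, `F` a finite field with `q^n` elements, and `g` a
generator of the cyclic multiplicative group `Fˣ`. Then every nonzero `x ∈ F` can be
written as `x = g ^ ((q^k - 1)/(q - 1) + n·δ)` with `1 ≤ k ≤ n` and `δ ∈ ℕ`, where
`(q^k - 1)/(q - 1) = ∑_{i=0}^{k-1} q^i`. -/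
theorem dickson_pair_units_eq_pow (q n : ℕ) (h : DicksonPair q n)
    (F : Type*) [Field F] [Fintype F] (hcard : Fintype.card F = q ^ n)
    (g : Fˣ) (hg : ∀ x : Fˣ, x ∈ Subgroup.zpowers g) :
    ∀ x : F, x ≠ 0 → ∃ (k δ : ℕ), 1 ≤ k ∧ k ≤ n ∧
      x = (g : F) ^ ((∑ i ∈ Finset.range k, q ^ i) + n * δ) := by
  -- basic facts
  have hq : 2 ≤ q := by
    obtain ⟨p, l, hp, hl, hql⟩ := h.1
    calc 2 ≤ p := hp.two_le
    _ ≤ p ^ l := Nat.le_self_pow (by omega) p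
    _ = q := hql.symm
  have hn : n ≠ 0 := by
    rintro rfl
    rw [pow_zero] at hcard
    exact absurd hcard (Fintype.one_lt_card.ne'
      )
  have hqn : 2 ≤ q ^ n := le_trans hq (Nat.le_self_pow hn q)
  set N := q ^ n - 1 with hNdef
  have hN0 : N ≠ 0 := by omega
  have horder : orderOf g = N := by
    rw [orderOf_eq_card_of_forall_mem_zpowers hg, Nat.card_units, Nat.card_eq_fintype_card, hcard]
  set d := Nat.gcd n N with hddef
  have hdn : d ∣ n := Nat.gcd_dvd_left n N
  have hdN : d ∣ N := Nat.gcd_dvd_right n N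
  have hd0 : d ≠ 0 := fun h0 => hn (by simpa [h0] using zero_dvd_iff.mp (h0 ▸ hdn))
  have hdlen : d ≤ n := Nat.le_of_dvd (by omega) hdn
  -- coprimality
  have hcopqN : Nat.Coprime q N := by
    have h1 : q ∣ N + 1 := by
      have : N + 1 = q ^ n := by omega
      rw [this]; exact dvd_pow_self q hn
    exact Nat.Coprime.coprime_dvd_left h1
      (Nat.coprime_self_add_left.mpr (Nat.coprime_one_left N))
  have hcopdq : Nat.Coprime d q := (Nat.Coprime.coprime_dvd_right hdN hcopqN).symm
  -- injectivity ingredient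
  have hstep : ∀ j k : ℕ, j ≤ k →
      d ∣ (∑ i ∈ Finset.range k, q ^ i) - (∑ i ∈ Finset.range j, q ^ i) → d ∣ k - j := by
    intro j k hjk hdvd
    rcases Nat.eq_or_lt_of_le hjk with rfl | hlt
    · simp
    have hsplit := dp_split q j (k - j)
    rw [Nat.add_sub_cancel' hjk] at hsplit
    rw [hsplit, Nat.add_sub_cancel_left] at hdvd
    have : d ∣ ∑ i ∈ Finset.range (k - j), q ^ i :=
      (Nat.Coprime.dvd_of_dvd_mul_left (Nat.Coprime.pow_right j hcopdq) hdvd)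
    exact dp_key q n d (k - j) h hq hn hdn (by omega) this
  -- surjectivity of k ↦ S (k+1) mod d
  haveI : NeZero d := ⟨hd0⟩
  set f : Fin d → ZMod d := fun i => ((∑ i' ∈ Finset.range ((i : ℕ) + 1), q ^ i' : ℕ) : ZMod d)
    with hfdef
  have hinj : Function.Injective f := by
    have haux : ∀ a b : Fin d, (a : ℕ) ≤ b → f a = f b → a = b := by
      intro a b hab hfab
      have hmod : (∑ i' ∈ Finset.range ((a : ℕ) + 1), q ^ i')
          ≡ (∑ i' ∈ Finset.range ((b : ℕ) + 1), q ^ i') [MOD d] :=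
        (ZMod.natCast_eq_natCast_iff _ _ _).mp hfab
      have hle : (∑ i' ∈ Finset.range ((a : ℕ) + 1), q ^ i')
          ≤ (∑ i' ∈ Finset.range ((b : ℕ) + 1), q ^ i') :=
        Finset.sum_le_sum_of_subset (Finset.range_subset_range.mpr (by omega))
      have hdvd : d ∣ (∑ i' ∈ Finset.range ((b : ℕ) + 1), q ^ i')
          - (∑ i' ∈ Finset.range ((a : ℕ) + 1), q ^ i') :=
        (Nat.modEq_iff_dvd' hle).mp hmod
      have := hstep ((a : ℕ) + 1) ((b : ℕ) + 1) (by omega) hdvd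
      have hba : (b : ℕ) + 1 - ((a : ℕ) + 1) = (b : ℕ) - a := by omega
      rw [hba] at this
      rcases Nat.eq_zero_or_pos ((b : ℕ) - a) with h0 | hpos
      · exact Fin.ext (by omega)
      · have := Nat.le_of_dvd hpos this
        have hbd : (b : ℕ) < d := b.isLt
        omega
    intro a b hfab
    rcases le_total (a : ℕ) (b : ℕ) with hab | hba
    · exact haux a b hab hfab
    · exact (haux b a hba hfab.symm).symm
  have hbij : Function.Bijective f :=
    (Fintype.bijective_iff_injective_and_card f).mpr ⟨hinj, by simp [ZMod.card]⟩
  -- main argument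
  intro x hx
  obtain ⟨u, rfl⟩ := hx.isUnit
  obtain ⟨m, hgm⟩ : ∃ m : ℕ, g ^ m = u := mem_powers_iff_mem_zpowers.mpr (hg u)
  obtain ⟨i, hi⟩ := hbij.2 ((m : ZMod d))
  set S : ℕ := ∑ i' ∈ Finset.range ((i : ℕ) + 1), q ^ i' with hSdef
  have hmod : S ≡ m [MOD d] := (ZMod.natCast_eq_natCast_iff _ _ _).mp hi
  obtain ⟨c, hc⟩ : (d : ℤ) ∣ (m : ℤ) - (S : ℤ) := hmod.dvd
  set A := Nat.gcdA n N with hA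
  set B := Nat.gcdB n N with hB
  have hbez : (d : ℤ) = n * A + N * B := Nat.gcd_eq_gcd_ab n N
  set δ' : ℤ := c * A with hδ'
  set t : ℕ := δ'.natAbs with ht
  have hnn : (0 : ℤ) ≤ δ' + t * N := by
    have h1 : -δ' ≤ (δ'.natAbs : ℤ) := by
      rw [← Int.abs_eq_natAbs]; exact neg_le_abs δ'
    have h2 : (1 : ℤ) ≤ (N : ℤ) := by exact_mod_cast Nat.one_le_iff_ne_zero.mpr hN0
    have h3 : (0 : ℤ) ≤ (δ'.natAbs : ℤ) := Int.natCast_nonneg _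
    nlinarith
  set δ : ℕ := (δ' + t * N).toNat with hδ
  have hcast : (δ : ℤ) = δ' + t * N := Int.toNat_of_nonneg hnn
  have hik : (i : ℕ) < d := i.isLt
  refine ⟨(i : ℕ) + 1, δ, by omega, by omega, ?_⟩
  have hdvdN : (N : ℤ) ∣ (m : ℤ) - ((S + n * δ : ℕ) : ℤ) := by
    refine ⟨B * c - n * t, ?_⟩
    push_cast [hcast, hδ']
    linear_combination hc + c * hbez
  have hmodN : (S + n * δ) ≡ m [MOD N] := Nat.modEq_iff_dvd.mpr hdvdN
  have hpow : g ^ (S + n * δ) = g ^ m := by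
    rw [pow_eq_pow_iff_modEq, horder]; exact hmodN
  rw [hgm] at hpow
  calc (↑u : F) = ↑(g ^ (S + n * δ)) := by rw [hpow]
    _ = (g : F) ^ (S + n * δ) := Units.val_pow_eq_pow_val _ _
end

section
/- Let (q,n) be a Dickson pair, let F be a finite field with exactly q^n elements, let g be a generator of the cyclic multiplicative group F^×, and let H be the subgroup of F^× generated by g^n. If 1 ≤ k₁, k₂ ≤ n and the cosets H·g^{(q^{k₁}-1)/(q-1)} and H·g^{(q^{k₂}-1)/(q-1)} coincide, then k₁ = k₂. -/
open Finset

private lemma dp_geom_nat (q k : ℕ) (hq : 1 ≤ q) :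
    (∑ i ∈ range k, q ^ i) * (q - 1) = q ^ k - 1 := by
  have hq' : (1:ℕ) ≤ q ^ k := Nat.one_le_pow _ _ hq
  zify [hq, hq']
  linear_combination geom_sum_mul (q : ℤ) k

private lemma dp_geom_mod (p q d : ℕ) (hq : 1 ≤ q) (hp : p ∣ q - 1) :
    ((∑ i ∈ range d, q ^ i : ℕ) : ZMod p) = (d : ZMod p) := by
  have hq1 : (q : ZMod p) = 1 := by
    have h0 : ((q - 1 : ℕ) : ZMod p) = 0 :=
      (ZMod.natCast_eq_zero_iff _ _).mpr hp
    have h1 : q - 1 + 1 = q := by omega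
    calc (q : ZMod p) = ((q - 1 + 1 : ℕ) : ZMod p) := by rw [h1]
    _ = 1 := by push_cast [h0]; ring
  push_cast
  simp [hq1]

private lemma dp_dvd_of_dvd_geom {p q d : ℕ} (hq : 1 ≤ q) (hp : p ∣ q - 1)
    (h : p ∣ ∑ i ∈ range d, q ^ i) : p ∣ d := by
  rw [← ZMod.natCast_eq_zero_iff] at h ⊢
  rwa [dp_geom_mod p q d hq hp] at h

private lemma dp_geom_dvd {p q : ℕ} (hq : 1 ≤ q) (hp : p ∣ q - 1) :
    p ∣ ∑ i ∈ range p, q ^ i := by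
  rw [← ZMod.natCast_eq_zero_iff, dp_geom_mod p q p hq hp]
  exact ZMod.natCast_self p

private lemma dp_factor (q p e : ℕ) :
    ∑ i ∈ range (p * e), q ^ i =
      (∑ i ∈ range p, q ^ i) * ∑ j ∈ range e, (q ^ p) ^ j := by
  induction e with
  | zero => simp
  | succ e ih =>
    rw [Nat.mul_succ, Finset.sum_range_add, ih, Finset.sum_range_succ]
    have : ∀ i, q ^ (p * e + i) = (q ^ p) ^ e * q ^ i := by
      intro i; rw [pow_add, pow_mul]
    simp only [this, ← Finset.mul_sum]
    ring

private lemma dp_exact (p q : ℕ) (hp : p.Prime) (hq : 2 ≤ q) (hdvd : p ∣ q - 1)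
    (h4 : p = 2 → 4 ∣ q - 1) :
    ∃ u, (∑ i ∈ range p, q ^ i) = p * u ∧ ¬ p ∣ u := by
  set N := p * p with hN
  have hm2 : ((q - 1 : ℕ) : ZMod N) * ((q - 1 : ℕ) : ZMod N) = 0 := by
    rw [← Nat.cast_mul, ZMod.natCast_eq_zero_iff]
    exact mul_dvd_mul hdvd hdvd
  have hq1 : (q : ZMod N) = 1 + ((q - 1 : ℕ) : ZMod N) := by
    have : q = q - 1 + 1 := by omega
    nth_rewrite 1 [this]
    push_cast
    ring
  have hpow : ∀ i : ℕ, (q : ZMod N) ^ i = 1 + (i : ZMod N) * ((q - 1 : ℕ) : ZMod N) := by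
    intro i
    induction i with
    | zero => simp
    | succ i ih =>
      rw [pow_succ, ih, hq1]
      push_cast
      linear_combination (i : ZMod N) * hm2
  -- the Gauss-sum term vanishes mod p^2
  have hgauss : (((∑ i ∈ range p, i) * (q - 1) : ℕ) : ZMod N) = 0 := by
    rw [ZMod.natCast_eq_zero_iff, hN]
    rcases hp.eq_two_or_odd' with h2 | hodd
    · subst h2
      simpa [Finset.sum_range_succ] using h4 rfl
    · have h2 : 2 ∣ p - 1 := by rcases hodd with ⟨c, hc⟩; omega
      have : ∑ i ∈ range p, i = p * ((p - 1) / 2) := by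
        rcases h2 with ⟨c, hc⟩
        have h1 : (∑ i ∈ range p, i) * 2 = p * (p - 1) := Finset.sum_range_id_mul_two p
        rw [hc] at h1 ⊢
        have hc2 : 2 * c / 2 = c := by omega
        have h3 : p * (2 * c) = p * c * 2 := by ring
        rw [h3] at h1
        rw [hc2]
        omega
      rw [this]
      exact mul_dvd_mul (Dvd.intro _ rfl) hdvd
  have hsum : ((∑ i ∈ range p, q ^ i : ℕ) : ZMod N) = (p : ZMod N) := by
    push_cast
    rw [Finset.sum_congr rfl (fun i _ => hpow i)]
    rw [Finset.sum_add_distrib, ← Finset.sum_mul]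
    have : ((∑ i ∈ range p, (i : ZMod N))) * ((q - 1 : ℕ) : ZMod N) = 0 := by
      have := hgauss
      push_cast at this
      exact this
    simp [this]
  -- convert to a Nat.ModEq statement
  have hmod : (∑ i ∈ range p, q ^ i) ≡ p [MOD N] :=
    (ZMod.natCast_eq_natCast_iff _ _ _).mp hsum
  have hge : p ≤ ∑ i ∈ range p, q ^ i := by
    calc p = ∑ _i ∈ range p, 1 := by simp
    _ ≤ ∑ i ∈ range p, q ^ i :=
      Finset.sum_le_sum fun i _ => Nat.one_le_pow _ _ (by omega)
  have hdd : N ∣ (∑ i ∈ range p, q ^ i) - p := (Nat.modEq_iff_dvd' hge).mp hmod.symm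
  obtain ⟨t, ht⟩ := hdd
  have hS : (∑ i ∈ range p, q ^ i) = p + p * p * t := by rw [hN] at ht; omega
  refine ⟨1 + p * t, by rw [hS]; ring, ?_⟩
  intro hcon
  have : p ∣ 1 := (Nat.dvd_add_right (Dvd.intro t rfl)).mp (by rwa [add_comm] at hcon)
  exact hp.one_lt.ne' (Nat.dvd_one.mp this)

private lemma dp_pow_dvd (p : ℕ) (hp : p.Prime) :
    ∀ k q d : ℕ, 2 ≤ q → p ∣ q - 1 → (p = 2 → 4 ∣ q - 1) →
      p ^ k ∣ ∑ i ∈ range d, q ^ i → p ^ k ∣ d := by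
  intro k
  induction k with
  | zero => simp
  | succ k ih =>
    intro q d hq hdvd h4 hS
    have hq1 : 1 ≤ q := by omega
    have hpd : p ∣ d :=
      dp_dvd_of_dvd_geom hq1 hdvd
        ((dvd_pow_self p (Nat.succ_ne_zero k)).trans hS)
    obtain ⟨e, rfl⟩ := hpd
    rw [dp_factor] at hS
    obtain ⟨u, hu, hpu⟩ := dp_exact p q hp hq hdvd h4
    rw [hu] at hS
    have hS' : p ^ k ∣ u * ∑ j ∈ range e, (q ^ p) ^ j := by
      have h1 : p * p ^ k ∣ p * (u * ∑ j ∈ range e, (q ^ p) ^ j) := by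
        rw [← mul_assoc, ← pow_succ']
        exact hS
      exact (mul_dvd_mul_iff_left hp.pos.ne').mp h1
    have hcop : Nat.Coprime (p ^ k) u :=
      Nat.Coprime.pow_left k ((Nat.Prime.coprime_iff_not_dvd hp).mpr hpu)
    have hT : p ^ k ∣ ∑ j ∈ range e, (q ^ p) ^ j :=
      hcop.dvd_of_dvd_mul_left hS'
    have hq2 : 2 ≤ q ^ p := le_trans hq (Nat.le_self_pow hp.pos.ne' q)
    have hqp : q - 1 ∣ q ^ p - 1 := by
      simpa using Nat.sub_dvd_pow_sub_pow q 1 p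
    have he : p ^ k ∣ e :=
      ih (q ^ p) e hq2 (hdvd.trans hqp) (fun h2 => (h4 h2).trans hqp) hT
    rw [pow_succ']
    exact mul_dvd_mul_left p he

private lemma dp_key_s9 (q n d : ℕ) (hq : 2 ≤ q) (hdn : d < n)
    (hr : ∀ r : ℕ, r.Prime → r ∣ n → r ∣ q - 1) (h4 : q % 4 = 3 → ¬ (4 ∣ n))
    (hdvd : n ∣ ∑ i ∈ range d, q ^ i) : d = 0 := by
  have hnd : n ∣ d := by
    rw [Nat.dvd_iff_prime_pow_dvd_dvd]
    intro p k hp hpk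
    have hp' : p.Prime := hp
    cases k with
    | zero => simp
    | succ k =>
      have hpn : p ∣ n := (dvd_pow_self p (Nat.succ_ne_zero k)).trans hpk
      have hpq : p ∣ q - 1 := hr p hp' hpn
      have hS : p ^ (k + 1) ∣ ∑ i ∈ range d, q ^ i := hpk.trans hdvd
      by_cases hp2 : p = 2
      · subst hp2
        have hqodd : q % 2 = 1 := by
          rcases hpq with ⟨c, hc⟩; omega
        rcases (by omega : q % 4 = 1 ∨ q % 4 = 3) with h1 | h3
        · exact dp_pow_dvd 2 hp' (k + 1) q d hq hpq (fun _ => by omega) hS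
        · have hn4 := h4 h3
          have hk0 : k = 0 := by
            by_contra hk
            have h22 : (4:ℕ) ∣ 2 ^ (k + 1) := by
              have h4eq : (4:ℕ) = 2 ^ 2 := rfl
              rw [h4eq]
              exact pow_dvd_pow 2 (by omega)
            exact hn4 (h22.trans hpk)
          subst hk0
          simpa using dp_dvd_of_dvd_geom (by omega : 1 ≤ q) hpq (by simpa using hS)
      · exact dp_pow_dvd p hp' (k + 1) q d hq hpq (fun h2 => absurd h2 hp2) hS
  exact Nat.eq_zero_of_dvd_of_lt hnd hdn

private lemma dp_pow_pow_dvd (p q : ℕ) (hq : 2 ≤ q) (hpq : p ∣ q - 1) :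
    ∀ k : ℕ, p ^ (k + 1) ∣ q ^ (p ^ k) - 1 := by
  intro k
  induction k with
  | zero => simpa using hpq
  | succ k ih =>
    set x := q ^ (p ^ k) with hx
    have hx1 : 1 ≤ x := Nat.one_le_pow _ _ (by omega)
    have hstep : q ^ (p ^ (k + 1)) - 1 = (∑ i ∈ range p, x ^ i) * (x - 1) := by
      rw [dp_geom_nat x p hx1, hx, ← pow_mul, ← pow_succ]
    rw [hstep, pow_succ']
    exact mul_dvd_mul
      (dp_geom_dvd hx1 ((dvd_pow_self p (Nat.succ_ne_zero k)).trans ih))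
      ih

private lemma dp_n_dvd (q n : ℕ) (hq : 2 ≤ q)
    (hr : ∀ r : ℕ, r.Prime → r ∣ n → r ∣ q - 1) : n ∣ q ^ n - 1 := by
  rw [Nat.dvd_iff_prime_pow_dvd_dvd]
  intro p k hp hpk
  have hp' : p.Prime := hp
  cases k with
  | zero => simp
  | succ k =>
    have hpn : p ∣ n := (dvd_pow_self p (Nat.succ_ne_zero k)).trans hpk
    have hpq : p ∣ q - 1 := hr p hp' hpn
    have h1 : p ^ (k + 1) ∣ q ^ (p ^ k) - 1 := dp_pow_pow_dvd p q hq hpq k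
    have h2 : p ^ k ∣ n := (pow_dvd_pow p (Nat.le_succ k)).trans hpk
    obtain ⟨t, rfl⟩ := h2
    have h3 : q ^ (p ^ k) - 1 ∣ q ^ (p ^ k * t) - 1 := by
      rw [pow_mul]
      simpa using Nat.sub_dvd_pow_sub_pow (q ^ (p ^ k)) 1 t
    exact h1.trans h3

private lemma dp_two_le (q n : ℕ) (h : DicksonPair q n) : 2 ≤ q := by
  obtain ⟨⟨p, l, hp, hl, rfl⟩, -, -⟩ := h
  calc 2 ≤ p := hp.two_le
  _ ≤ p ^ l := Nat.le_self_pow (by omega) p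

private lemma dp_aux (q n k₁ k₂ : ℕ) (h : DicksonPair q n)
    (hk : k₂ ≤ k₁) (hk₂ : 1 ≤ k₂) (hk₁' : k₁ ≤ n)
    (hdvd : (n : ℤ) ∣ ((∑ i ∈ range k₁, q ^ i : ℕ) : ℤ) -
      ((∑ i ∈ range k₂, q ^ i : ℕ) : ℤ)) :
    k₁ = k₂ := by
  have hq : 2 ≤ q := dp_two_le q n h
  obtain ⟨d, rfl⟩ : ∃ d, k₁ = k₂ + d := ⟨k₁ - k₂, by omega⟩
  rw [Finset.sum_range_add] at hdvd
  have hdvd' : (n : ℤ) ∣ ((q ^ k₂ * ∑ i ∈ range d, q ^ i : ℕ) : ℤ) := by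
    push_cast [pow_add] at hdvd ⊢
    rw [Finset.mul_sum]
    simpa [add_sub_cancel_left] using hdvd
  have hnat : n ∣ q ^ k₂ * ∑ i ∈ range d, q ^ i := Int.natCast_dvd_natCast.mp hdvd'
  -- n is coprime to q ^ k₂
  have hnq : n ∣ q ^ n - 1 := dp_n_dvd q n hq h.2.1
  have h1 : q ^ n - 1 + 1 = q ^ n := by
    have : 1 ≤ q ^ n := Nat.one_le_pow _ _ (by omega)
    omega
  have hbase : Nat.Coprime (q ^ n) (q ^ n - 1) := by
    rw [← h1]
    have h2 : Nat.gcd (q ^ n - 1 + 1) (q ^ n - 1) = Nat.gcd 1 (q ^ n - 1) := by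
      rw [Nat.add_comm, Nat.gcd_add_self_left]
    simpa [Nat.Coprime] using h2
  have hcop : Nat.Coprime n (q ^ k₂) :=
    ((Nat.Coprime.coprime_dvd_left (pow_dvd_pow q (le_trans (by omega) hk₁')) hbase).coprime_dvd_right hnq).symm
  have hSd : n ∣ ∑ i ∈ range d, q ^ i := hcop.dvd_of_dvd_mul_left hnat
  have hd0 : d = 0 := dp_key_s9 q n d hq (by omega) h.2.1 h.2.2 hSd
  omega

/-- Let `(q, n)` be a Dickson pair, `F` a finite field with `q^n` elements, `g` a
generator of `Fˣ`, and `H` the subgroup of `Fˣ` generated by `g^n`. If `1 ≤ k₁, k₂ ≤ n`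
and the cosets `H·g^{(q^{k₁}-1)/(q-1)}` and `H·g^{(q^{k₂}-1)/(q-1)}` coincide (here
stated via the quotient `Fˣ ⧸ H`, which is the same as right cosets since `Fˣ` is
commutative), then `k₁ = k₂`. Here `(q^k - 1)/(q - 1) = ∑_{i=0}^{k-1} q^i`. -/
theorem dickson_pair_coset_inj (q n : ℕ) (h : DicksonPair q n)
    (F : Type*) [Field F] [Fintype F] (hcard : Fintype.card F = q ^ n)
    (g : Fˣ) (hg : ∀ x : Fˣ, x ∈ Subgroup.zpowers g)
    (k₁ k₂ : ℕ) (hk₁ : 1 ≤ k₁) (hk₁' : k₁ ≤ n) (hk₂ : 1 ≤ k₂) (hk₂' : k₂ ≤ n)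
    (hcoset :
      (QuotientGroup.mk (g ^ (∑ i ∈ Finset.range k₁, q ^ i)) :
          Fˣ ⧸ Subgroup.zpowers (g ^ n)) =
        QuotientGroup.mk (g ^ (∑ i ∈ Finset.range k₂, q ^ i))) :
    k₁ = k₂ := by
  have hq : 2 ≤ q := dp_two_le q n h
  set S₁ := ∑ i ∈ Finset.range k₁, q ^ i with hS₁
  set S₂ := ∑ i ∈ Finset.range k₂, q ^ i with hS₂
  have hord : orderOf g = q ^ n - 1 := by
    rw [orderOf_eq_card_of_forall_mem_zpowers hg, Nat.card_units,
      Nat.card_eq_fintype_card, hcard]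
  rw [QuotientGroup.eq] at hcoset
  obtain ⟨m, hm⟩ := Subgroup.mem_zpowers_iff.mp hcoset
  rw [← zpow_natCast g S₁, ← zpow_natCast g S₂, ← zpow_natCast g n, ← zpow_mul,
    ← zpow_neg, ← zpow_add] at hm
  rw [zpow_eq_zpow_iff_modEq] at hm
  have hdvd1 : ((orderOf g : ℕ) : ℤ) ∣ (-(S₁:ℤ) + S₂) - (n : ℤ) * m := hm.dvd
  have hndvd : (n : ℤ) ∣ ((orderOf g : ℕ) : ℤ) := by
    rw [hord]
    exact_mod_cast Int.natCast_dvd_natCast.mpr (dp_n_dvd q n hq h.2.1)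
  have hdvd2 : (n : ℤ) ∣ (S₂ : ℤ) - (S₁ : ℤ) := by
    have h1 : (n : ℤ) ∣ (-(S₁:ℤ) + S₂) - (n : ℤ) * m := hndvd.trans hdvd1
    have h2 : (n : ℤ) ∣ (n : ℤ) * m := Dvd.intro m rfl
    have h3 := dvd_add h1 h2
    have heq : (-(S₁:ℤ) + S₂ - (n:ℤ) * m) + (n:ℤ) * m = (S₂:ℤ) - S₁ := by ring
    rwa [heq] at h3
  rcases le_total k₂ k₁ with hle | hle
  · refine dp_aux q n k₁ k₂ h hle hk₂ hk₁' ?_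
    have h4 := dvd_neg.mpr hdvd2
    rwa [neg_sub] at h4
  · exact (dp_aux q n k₂ k₁ h hle hk₁ hk₂' hdvd2).symm
end

section
/- On the field F = GF(3²) with 9 elements, define a new multiplication by x ∘ y = x·y if y is a square in F (i.e., y = z² for some z ∈ F), and x ∘ y = x³·y otherwise. Then ∘ is associative: (x ∘ y) ∘ z = x ∘ (y ∘ z) for all x, y, z ∈ F. -/
instance : Fact (Nat.Prime 3) := ⟨by norm_num⟩

open Classical in
/-- The Dickson multiplication on `GF(3²)`: `x ∘ y = x·y` if `y` is a square and
`x ∘ y = x³·y` otherwise. -/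
noncomputable def dicksonMul (x y : GaloisField 3 2) : GaloisField 3 2 :=
  if ∃ z : GaloisField 3 2, y = z ^ 2 then x * y else x ^ 3 * y

/-! Write `x ∘ y = σ_y(x)·y`, where `σ_y` is the identity when `y` is a square and an involutive
field automorphism `φ` (here the Frobenius `x ↦ x³` of `GF(9)`) otherwise. Associativity amounts to
`σ_{σ_z(y)·z} = σ_z ∘ σ_y`. Since `φ` preserves squares, `σ_z(y)` lies in the square class of `y`,
and in a finite field the square class of a product of nonzero elements is the product of the
classes; as `φ² = id`, the map `y ↦ σ_y` is a homomorphism from `F^× / F^×²` to the automorphisms. -/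

theorem FiniteField.isSquare_mul_iff {F : Type*} [Field F] [Finite F] {y z : F}
    (hy : y ≠ 0) (hz : z ≠ 0) : IsSquare (y * z) ↔ (IsSquare y ↔ IsSquare z) := by
  classical
  have := Fintype.ofFinite F
  rw [← quadraticChar_one_iff_isSquare (mul_ne_zero hy hz), ← quadraticChar_one_iff_isSquare hy,
    ← quadraticChar_one_iff_isSquare hz, map_mul]
  rcases quadraticChar_dichotomy hy with hy' | hy' <;>
    rcases quadraticChar_dichotomy hz with hz' | hz' <;> simp [hy', hz']

theorem isSquare_map_iff_of_involutive {M G : Type*} [MulOneClass M] [FunLike G M M]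
    [MonoidHomClass G M M] {f : G} (hf : Function.Involutive f) {a : M} : IsSquare (f a) ↔ IsSquare a :=
  ⟨fun h => hf a ▸ h.map f, IsSquare.map f⟩

section SquareTwistedMul

variable {F : Type*} [Field F] (φ : F →+* F)

open Classical in
noncomputable def squareTwistedMul (x y : F) : F :=
  if IsSquare y then x * y else φ x * y

theorem squareTwistedMul_assoc [Finite F] (hφ : Function.Involutive φ) (x y z : F) :
    squareTwistedMul φ (squareTwistedMul φ x y) z =
      squareTwistedMul φ x (squareTwistedMul φ y z) := by
  rcases eq_or_ne y 0 with rfl | hy0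
  · simp [squareTwistedMul]
  rcases eq_or_ne z 0 with rfl | hz0
  · simp [squareTwistedMul]
  have hφy : IsSquare (φ y) ↔ IsSquare y := isSquare_map_iff_of_involutive hφ
  have hφy0 : φ y ≠ 0 := (map_ne_zero φ).mpr hy0
  by_cases hy : IsSquare y <;> by_cases hz : IsSquare z <;>
    simp [squareTwistedMul, hy, hz, hφy, hφ x, map_mul,
      FiniteField.isSquare_mul_iff hy0 hz0, FiniteField.isSquare_mul_iff hφy0 hz0, mul_assoc]

end SquareTwistedMul

theorem GaloisField.frobenius_involutive (p : ℕ) [Fact p.Prime] :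
    Function.Involutive (frobenius (GaloisField p 2) p) := by
  have := Fintype.ofFinite (GaloisField p 2)
  have hcard : Fintype.card (GaloisField p 2) = p ^ 2 := by
    rw [← Nat.card_eq_fintype_card, GaloisField.card p 2 two_ne_zero]
  intro x
  simpa [sq] using congr($(FiniteField.frobenius_pow hcard) x)

theorem dicksonMul_eq_squareTwistedMul :
    dicksonMul = squareTwistedMul (frobenius (GaloisField 3 2) 3) := by
  funext x y
  simp only [dicksonMul, squareTwistedMul, frobenius_def]
  classical
  exact if_congr (isSquare_iff_exists_sq y).symm rfl rfl

/-- The Dickson multiplication `∘` on `GF(3²)` is associative. -/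
theorem dicksonMul_assoc :
    ∀ x y z : GaloisField 3 2,
      dicksonMul (dicksonMul x y) z = dicksonMul x (dicksonMul y z) := by
  rw [dicksonMul_eq_squareTwistedMul]
  exact squareTwistedMul_assoc _ (GaloisField.frobenius_involutive 3)
end

section
/- On the field F = GF(3²) with 9 elements, define a new multiplication by x ∘ y = x·y if y is a square in F (i.e., y = z² for some z ∈ F), and x ∘ y = x³·y otherwise. Then 1 ∘ x = x ∘ 1 = x for all x ∈ F, for every nonzero x ∈ F there exists y ∈ F with x ∘ y = 1 and y ∘ x = 1, and there exist a, b ∈ F with a ∘ b ≠ b ∘ a, so ∘ is not commutative. -/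
private noncomputable instance : Fintype (GaloisField 3 2) := Fintype.ofFinite _

private lemma gfcard : Fintype.card (GaloisField 3 2) = 9 := by
  have := GaloisField.card 3 2 (by norm_num)
  rw [Nat.card_eq_fintype_card] at this
  omega

private lemma pow9 (x : GaloisField 3 2) : x ^ 9 = x := by
  have := FiniteField.pow_card x
  rwa [gfcard] at this

private lemma gfchar : ringChar (GaloisField 3 2) ≠ 2 := by
  have : ringChar (GaloisField 3 2) = 3 := ringChar.eq _ 3
  omega

private lemma sq_cube {x : GaloisField 3 2} (h : ∃ z, x ^ 3 = z ^ 2) :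
    ∃ z, x = z ^ 2 := by
  obtain ⟨z, hz⟩ := h
  refine ⟨z ^ 3, ?_⟩
  have : x = (x ^ 3) ^ 3 := by rw [← pow_mul]; exact (pow9 x).symm
  rw [this, hz]; ring

private lemma sq_inv {x : GaloisField 3 2} (h : ∃ z, x⁻¹ = z ^ 2) :
    ∃ z, x = z ^ 2 := by
  obtain ⟨z, hz⟩ := h
  refine ⟨z⁻¹, ?_⟩
  rw [← inv_inv x, hz]
  rw [← inv_pow]

/-- For the Dickson multiplication `∘` on `GF(3²)`: `1` is a two-sided identity,
every nonzero element has a two-sided inverse, and `∘` is not commutative. -/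
theorem dicksonMul_one_inv_not_comm :
    (∀ x : GaloisField 3 2, dicksonMul 1 x = x ∧ dicksonMul x 1 = x) ∧
      (∀ x : GaloisField 3 2, x ≠ 0 →
        ∃ y : GaloisField 3 2, dicksonMul x y = 1 ∧ dicksonMul y x = 1) ∧
      ∃ a b : GaloisField 3 2, dicksonMul a b ≠ dicksonMul b a := by
  have hone : ∃ z : GaloisField 3 2, (1 : GaloisField 3 2) = z ^ 2 := ⟨1, by ring⟩
  refine ⟨fun x => ⟨?_, ?_⟩, fun x hx => ?_, ?_⟩
  · unfold dicksonMul
    split <;> ring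
  · unfold dicksonMul
    rw [if_pos hone]; ring
  · by_cases hsq : ∃ z : GaloisField 3 2, x = z ^ 2
    · refine ⟨x⁻¹, ?_, ?_⟩ <;> unfold dicksonMul
      · have : ∃ z : GaloisField 3 2, x⁻¹ = z ^ 2 := by
          obtain ⟨z, hz⟩ := hsq
          exact ⟨z⁻¹, by rw [hz, ← inv_pow]⟩
        rw [if_pos this]; field_simp
      · rw [if_pos hsq]; field_simp
    · refine ⟨(x⁻¹) ^ 3, ?_, ?_⟩ <;> unfold dicksonMul
      · have hns : ¬ ∃ z : GaloisField 3 2, (x⁻¹) ^ 3 = z ^ 2 := by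
          intro h
          exact hsq (sq_inv (sq_cube h))
        rw [if_neg hns, inv_pow]
        field_simp
      · rw [if_neg hsq]
        have : ((x⁻¹) ^ 3) ^ 3 = x⁻¹ := by
          rw [← pow_mul]; exact pow9 x⁻¹
        rw [this]; field_simp
  · have hneg : IsSquare (-1 : GaloisField 3 2) := by
      rw [FiniteField.isSquare_neg_one_iff, gfcard]; norm_num
    obtain ⟨c, hc⟩ := hneg
    obtain ⟨b, hb⟩ := FiniteField.exists_nonsquare gfchar
    have hc0 : c ≠ 0 := by
      intro h; rw [h, mul_zero] at hc; exact (by norm_num : (-1:GaloisField 3 2) ≠ 0) hc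
    have hcsq : ∃ z : GaloisField 3 2, c = z ^ 2 := by
      rw [← isSquare_iff_exists_sq]
      rw [FiniteField.isSquare_iff gfchar hc0, gfcard]
      show c ^ 4 = 1
      have : c ^ 4 = (c * c) * (c * c) := by ring
      rw [this, ← hc]; ring
    have hbns : ¬ ∃ z : GaloisField 3 2, b = z ^ 2 := by
      rw [← isSquare_iff_exists_sq]; exact hb
    have hb0 : b ≠ 0 := by
      intro h; exact hb ⟨0, by rw [h]; ring⟩
    refine ⟨c, b, ?_⟩
    unfold dicksonMul
    rw [if_neg hbns, if_pos hcsq]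
    have hc3 : c ^ 3 = -c := by
      have : c ^ 3 = (c * c) * c := by ring
      rw [this, ← hc]; ring
    rw [hc3]
    intro h
    have h2 : (2 : GaloisField 3 2) * (c * b) = 0 := by
      have := h
      ring_nf at this ⊢
      linear_combination -this
    have h20 : (2 : GaloisField 3 2) ≠ 0 := by
      have : (2 : GaloisField 3 2) = -1 := by
        have h3 : (3 : GaloisField 3 2) = 0 := by
          exact_mod_cast CharP.cast_eq_zero (GaloisField 3 2) 3
        linear_combination h3
      rw [this]; norm_num
    have := mul_eq_zero.mp h2
    rcases this with h' | h'
    · exact h20 h'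
    · rcases mul_eq_zero.mp h' with h'' | h''
      · exact hc0 h''
      · exact hb0 h''
end
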